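/- For λ ∈ ℂ with λ(λ^3 - 1)(8λ^3 + 1) ≠ 0, the algebra C_λ = ℂ[x,y,z]/(x^2 - λyz, y^2 - λxz, z^2 - λxy) is a finite-dimensional local ℂ-algebra. -/

import Mathlib

open MvPolynomial

/-! Squaring `x² = λyz` and substituting the other two relations gives `x⁴ = λ³x⁴`, so for
`λ³ ≠ 1` the images of `x`, `y`, `z` are nilpotent. Hence `C_λ` is integral, thus finite, over
`ℂ`, and the ideal `(x, y, z)`, maximal as the image of the kernel of evaluation at the origin,
lies in the nilradical; a maximal ideal inside the nilradical is the only one. -/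

theorem IsNilpotent.isIntegral {R A : Type*} [CommRing R] [Ring A] [Algebra R A] {x : A}
    (hx : IsNilpotent x) : IsIntegral R x := by
  obtain ⟨n, hn⟩ := hx
  exact ⟨Polynomial.X ^ n, Polynomial.monic_X_pow n, by simpa using hn⟩

theorem IsLocalRing.of_isMaximal_of_le_nilradical {R : Type*} [CommRing R] {m : Ideal R}
    (hm : m.IsMaximal) (h : m ≤ nilradical R) : IsLocalRing R :=
  have : (nilradical R).IsMaximal := le_antisymm (nilradical_le_prime m) h ▸ hm
  of_isMaximal_nilradical R

/-- The relations are invariant under the cyclic permutation `x → y → z → x`. -/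
theorem pow_four_eq_zero_of_sq_eq_mul_mul {A : Type*} [CommRing A] {l x y z : A}
    (hl : IsUnit (1 - l ^ 3)) (hx : x ^ 2 = l * y * z) (hy : y ^ 2 = l * z * x)
    (hz : z ^ 2 = l * x * y) : x ^ 4 = 0 :=
  hl.mul_right_eq_zero.1 <| by
    linear_combination (x ^ 2 + l * y * z - l ^ 3 * x ^ 2) * hx + l ^ 2 * z ^ 2 * hy
      + l ^ 3 * x * z * hz

namespace MvPolynomial

section CommRing

variable {R σ : Type*} [CommRing R]

theorem ker_constantCoeff_eq_idealOfVars :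
    RingHom.ker (constantCoeff : MvPolynomial σ R →+* R) = idealOfVars σ R := by
  ext p
  rw [← pow_one (idealOfVars σ R), mem_pow_idealOfVars_iff', RingHom.mem_ker, constantCoeff_eq]
  simp [Finsupp.degree_eq_zero_iff]

theorem adjoin_range_mk_X (I : Ideal (MvPolynomial σ R)) :
    Algebra.adjoin R (Set.range fun i => Ideal.Quotient.mk I (X i)) = ⊤ := by
  rw [← Ideal.Quotient.mkₐ_eq_mk R, Set.range_comp', ← AlgHom.map_adjoin, adjoin_range_X,
    Algebra.map_top, AlgHom.range_eq_top]
  exact Ideal.Quotient.mkₐ_surjective R I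

variable {I : Ideal (MvPolynomial σ R)}

theorem finite_quotient_of_isNilpotent_mk_X [Finite σ]
    (h : ∀ i, IsNilpotent (Ideal.Quotient.mk I (X i))) :
    Module.Finite R (MvPolynomial σ R ⧸ I) := by
  have : Algebra.IsIntegral R (MvPolynomial σ R ⧸ I) := by
    rw [← integralClosure_eq_top_iff, eq_top_iff, ← adjoin_range_mk_X, Algebra.adjoin_le_iff]
    rintro _ ⟨i, rfl⟩
    exact (h i).isIntegral
  exact Algebra.IsIntegral.finite

theorem map_idealOfVars_le_nilradical (h : ∀ i, IsNilpotent (Ideal.Quotient.mk I (X i))) :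
    (idealOfVars σ R).map (Ideal.Quotient.mk I) ≤ nilradical _ := by
  rw [Ideal.map_span, Ideal.span_le]
  rintro _ ⟨_, ⟨i, rfl⟩, rfl⟩
  exact h i

theorem map_idealOfVars_fin_three {S : Type*} [CommRing S] (f : MvPolynomial (Fin 3) R →+* S) :
    (idealOfVars (Fin 3) R).map f = Ideal.span {f (X 0), f (X 1), f (X 2)} := by
  rw [Ideal.map_span, ← Set.range_comp]
  congr 1
  ext
  simp [Fin.exists_fin_succ, eq_comm]

end CommRing

variable {σ K : Type*} [Field K]

theorem isMaximal_idealOfVars : (idealOfVars σ K).IsMaximal := by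
  rw [← ker_constantCoeff_eq_idealOfVars]
  exact RingHom.ker_isMaximal_of_surjective _ fun c => ⟨C c, constantCoeff_C σ c⟩

theorem isMaximal_map_idealOfVars {I : Ideal (MvPolynomial σ K)} (hI : I ≤ idealOfVars σ K) :
    ((idealOfVars σ K).map (Ideal.Quotient.mk I)).IsMaximal :=
  have := isMaximal_idealOfVars (σ := σ) (K := K)
  Ideal.IsMaximal.map_of_surjective_of_ker_le Ideal.Quotient.mk_surjective
    (by rwa [Ideal.mk_ker])

end MvPolynomial

section Hesse

variable {R : Type*} [CommRing R]

/-- The Jacobian ideal of the Hesse cubic `x³ + y³ + z³ - 3λxyz`. -/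
noncomputable def hesseIdeal (l : R) : Ideal (MvPolynomial (Fin 3) R) :=
  Ideal.span {X 0 ^ 2 - C l * X 1 * X 2, X 1 ^ 2 - C l * X 0 * X 2, X 2 ^ 2 - C l * X 0 * X 1}

theorem hesseIdeal_le_idealOfVars (l : R) : hesseIdeal l ≤ idealOfVars (Fin 3) R := by
  rw [hesseIdeal, Ideal.span_le, ← ker_constantCoeff_eq_idealOfVars]
  rintro _ (rfl | rfl | rfl) <;> simp

theorem isNilpotent_mk_X_hesseIdeal {l : R} (hl : IsUnit (1 - l ^ 3)) (i : Fin 3) :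
    IsNilpotent (Ideal.Quotient.mk (hesseIdeal l) (X i)) := by
  set q := Ideal.Quotient.mk (hesseIdeal l)
  have rel {a b c : Fin 3} (h : X a ^ 2 - C l * X b * X c ∈ hesseIdeal l) :
      q (X a) ^ 2 = q (C l) * q (X b) * q (X c) := by
    rwa [← map_pow, ← map_mul, ← map_mul, Ideal.Quotient.mk_eq_mk_iff_sub_mem]
  have h0 : q (X 0) ^ 2 = q (C l) * q (X 1) * q (X 2) := rel (Ideal.subset_span (by simp))
  have h1 : q (X 1) ^ 2 = q (C l) * q (X 2) * q (X 0) := by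
    rw [mul_right_comm]
    exact rel (Ideal.subset_span (by simp))
  have h2 : q (X 2) ^ 2 = q (C l) * q (X 0) * q (X 1) := rel (Ideal.subset_span (by simp))
  have hu : IsUnit (1 - q (C l) ^ 3) := by simpa using hl.map (q.comp C)
  fin_cases i
  exacts [⟨4, pow_four_eq_zero_of_sq_eq_mul_mul hu h0 h1 h2⟩,
    ⟨4, pow_four_eq_zero_of_sq_eq_mul_mul hu h1 h2 h0⟩,
    ⟨4, pow_four_eq_zero_of_sq_eq_mul_mul hu h2 h0 h1⟩]

end Hesse

/-- For `λ` with `λ(λ³-1)(8λ³+1) ≠ 0`, the algebra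
`C_λ = ℂ[x,y,z]/(x² - λyz, y² - λxz, z² - λxy)` is a finite-dimensional local ℂ-algebra:
it has a unique maximal ideal, generated by the images of `x, y, z`. -/
theorem C_lambda_finite_local (l : ℂ) (hl : l * (l ^ 3 - 1) * (8 * l ^ 3 + 1) ≠ 0) :
    FiniteDimensional ℂ
      (MvPolynomial (Fin 3) ℂ ⧸
        Ideal.span {(X 0 ^ 2 - C l * X 1 * X 2 : MvPolynomial (Fin 3) ℂ),
          X 1 ^ 2 - C l * X 0 * X 2, X 2 ^ 2 - C l * X 0 * X 1}) ∧
    IsLocalRing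
      (MvPolynomial (Fin 3) ℂ ⧸
        Ideal.span {(X 0 ^ 2 - C l * X 1 * X 2 : MvPolynomial (Fin 3) ℂ),
          X 1 ^ 2 - C l * X 0 * X 2, X 2 ^ 2 - C l * X 0 * X 1}) ∧
    (Ideal.span
        {Ideal.Quotient.mk
            (Ideal.span {(X 0 ^ 2 - C l * X 1 * X 2 : MvPolynomial (Fin 3) ℂ),
              X 1 ^ 2 - C l * X 0 * X 2, X 2 ^ 2 - C l * X 0 * X 1}) (X 0),
          Ideal.Quotient.mk _ (X 1), Ideal.Quotient.mk _ (X 2)}).IsMaximal := by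
  have hl3 : IsUnit (1 - l ^ 3) :=
    (sub_ne_zero.2 (sub_ne_zero.1 (right_ne_zero_of_mul (left_ne_zero_of_mul hl))).symm).isUnit
  have hnil := isNilpotent_mk_X_hesseIdeal hl3
  have hmax := isMaximal_map_idealOfVars (hesseIdeal_le_idealOfVars l)
  refine ⟨finite_quotient_of_isNilpotent_mk_X hnil,
    .of_isMaximal_of_le_nilradical hmax (map_idealOfVars_le_nilradical hnil), ?_⟩
  rwa [map_idealOfVars_fin_three] at hmax
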